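/- arXiv:math/0412305 — 2 statements merged into one kernel-verified Lean document; each statement's English description precedes it below -/
import Mathlib

section
/- There exists a closed set S ⊆ ℝ³ whose convexity number is 2^{ℵ₀}. -/
open Cardinal

/-- The convexity number of `S`: the least cardinality of a family of convex
sets whose union is `S`. -/
noncomputable def convexityNumber {n : ℕ} (S : Set (Fin n → ℝ)) : Cardinal :=
  sInf {c : Cardinal | ∃ F : Set (Set (Fin n → ℝ)),
    (∀ A ∈ F, Convex ℝ A) ∧ ⋃₀ F = S ∧ Cardinal.mk F = c}

/-- The parabola `{x : x 1 = (x 0)^2, x 2 = 0}` in `ℝ³`. -/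
def parabolaSet : Set (Fin 3 → ℝ) := {x | x 1 = x 0 ^ 2 ∧ x 2 = 0}

lemma parabolaSet_closed : IsClosed parabolaSet := by
  have h1 : IsClosed {x : Fin 3 → ℝ | x 1 = x 0 ^ 2} :=
    isClosed_eq (continuous_apply 1) (by continuity)
  have h2 : IsClosed {x : Fin 3 → ℝ | x 2 = 0} :=
    isClosed_eq (continuous_apply 2) continuous_const
  exact h1.inter h2

/-- Any convex subset of the parabola is a subsingleton. -/
lemma parabola_convex_subsingleton {A : Set (Fin 3 → ℝ)} (hA : A ⊆ parabolaSet)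
    (hc : Convex ℝ A) {a b : Fin 3 → ℝ} (ha : a ∈ A) (hb : b ∈ A) : a = b := by
  have hm : (1/2 : ℝ) • a + (1/2 : ℝ) • b ∈ A :=
    hc ha hb (by norm_num) (by norm_num) (by norm_num)
  obtain ⟨ha1, ha2⟩ := hA ha
  obtain ⟨hb1, hb2⟩ := hA hb
  obtain ⟨hm1, -⟩ := hA hm
  simp only [Pi.add_apply, Pi.smul_apply, smul_eq_mul] at hm1
  rw [ha1, hb1] at hm1
  have h0 : a 0 = b 0 := by
    have hsq : (a 0 - b 0) ^ 2 = 0 := by linear_combination 4 * hm1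
    have := pow_eq_zero_iff (n := 2) (by norm_num) |>.mp hsq
    linarith [sub_eq_zero.mp this]
  funext i
  fin_cases i
  · exact h0
  · show a 1 = b 1; rw [ha1, hb1, h0]
  · show a 2 = b 2; rw [ha2, hb2]

lemma parabola_mk : Cardinal.mk parabolaSet = Cardinal.continuum := by
  apply le_antisymm
  · calc Cardinal.mk parabolaSet ≤ Cardinal.mk (Fin 3 → ℝ) := Cardinal.mk_set_le _
      _ = Cardinal.continuum := by
        simp only [Cardinal.mk_pi, Cardinal.mk_real, Cardinal.prod_const,
          Cardinal.lift_id, Cardinal.mk_fintype, Fintype.card_fin]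
        exact_mod_cast Cardinal.power_nat_eq aleph0_le_continuum (by norm_num)
  · rw [← Cardinal.mk_real]
    apply Cardinal.mk_le_of_injective
      (f := fun t : ℝ => (⟨fun i => if i = 0 then t else if i = 1 then t ^ 2 else 0,
        by refine ⟨?_, ?_⟩ <;> norm_num [show (1:Fin 3) ≠ 0 by decide, show (2:Fin 3) ≠ 0 by decide, show (2:Fin 3) ≠ 1 by decide]⟩ : parabolaSet))
    intro s t hst
    have := congrArg (fun x : parabolaSet => (x : Fin 3 → ℝ) 0) hst
    simpa using this

/-- There exists a closed set `S ⊆ ℝ³` whose convexity number is `2^ℵ₀`. -/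
theorem exists_closed_convexityNumber_continuum :
    ∃ S : Set (Fin 3 → ℝ), IsClosed S ∧ convexityNumber S = Cardinal.continuum := by
  refine ⟨parabolaSet, parabolaSet_closed, ?_⟩
  unfold convexityNumber
  have hmem : Cardinal.continuum ∈ {c : Cardinal | ∃ F : Set (Set (Fin 3 → ℝ)),
      (∀ A ∈ F, Convex ℝ A) ∧ ⋃₀ F = parabolaSet ∧ Cardinal.mk F = c} := by
    refine ⟨(fun x => ({x} : Set (Fin 3 → ℝ))) '' parabolaSet, ?_, ?_, ?_⟩
    · rintro A ⟨x, -, rfl⟩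
      exact convex_singleton x
    · ext x
      simp
    · rw [Cardinal.mk_image_eq (fun x y h => Set.singleton_injective h), parabola_mk]
  apply le_antisymm
  · exact csInf_le' hmem
  · apply le_csInf ⟨_, hmem⟩
    rintro c ⟨F, hFconv, hFun, rfl⟩
    rw [← parabola_mk]
    have hsub : ∀ A ∈ F, A ⊆ parabolaSet := by
      intro A hA
      rw [← hFun]
      exact Set.subset_sUnion_of_mem hA
    have hx : ∀ x : parabolaSet, ∃ A ∈ F, (x : Fin 3 → ℝ) ∈ A := by
      intro x
      have : (x : Fin 3 → ℝ) ∈ ⋃₀ F := by rw [hFun]; exact x.2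
      exact this
    choose g hgF hgx using hx
    apply Cardinal.mk_le_of_injective (f := fun x => (⟨g x, hgF x⟩ : F))
    intro x y hxy
    have h : g x = g y := congrArg Subtype.val hxy
    have hy : (y : Fin 3 → ℝ) ∈ g x := h ▸ hgx y
    exact Subtype.ext (parabola_convex_subsingleton (hsub _ (hgF x))
      (hFconv _ (hgF x)) (hgx x) hy)
end

section
/- The tower number 𝔱 is less than or equal to the unbounding number 𝔟. -/
open Cardinal

/-- `f ≤* g`: `f n ≤ g n` for all but finitely many `n`. -/
def LeStar (f g : ℕ → ℕ) : Prop := {n : ℕ | g n < f n}.Finite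

/-- The unbounding number `𝔟`. -/
noncomputable def bNumber : Cardinal :=
  sInf {c : Cardinal | ∃ B : Set (ℕ → ℕ),
    (¬ ∃ g : ℕ → ℕ, ∀ f ∈ B, LeStar f g) ∧ Cardinal.mk B = c}

/-- The tower number `𝔱`: the least cardinality of a family of infinite
subsets of `ℕ`, linearly (pre)ordered by `⊆*`, with no infinite
pseudo-intersection. -/
noncomputable def tNumber : Cardinal :=
  sInf {c : Cardinal | ∃ T : Set (Set ℕ),
    (∀ A ∈ T, A.Infinite) ∧
    (∀ A ∈ T, ∀ B ∈ T, (A \ B).Finite ∨ (B \ A).Finite) ∧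
    (¬ ∃ P : Set ℕ, P.Infinite ∧ ∀ A ∈ T, (P \ A).Finite) ∧
    Cardinal.mk T = c}

/-- Any `⊆*`-chain of infinite sets of size `< 𝔱` has a pseudo-intersection. -/
lemma chain_pseudo (T : Set (Set ℕ)) (h1 : ∀ A ∈ T, A.Infinite)
    (h2 : ∀ A ∈ T, ∀ B ∈ T, (A \ B).Finite ∨ (B \ A).Finite)
    (h3 : Cardinal.mk T < tNumber) :
    ∃ P : Set ℕ, P.Infinite ∧ ∀ A ∈ T, (P \ A).Finite := by
  by_contra h
  have : tNumber ≤ Cardinal.mk T := by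
    unfold tNumber
    exact csInf_le' ⟨T, h1, h2, h, rfl⟩
  exact absurd this (not_le.mpr h3)

/-- Thin an infinite set so consecutive gaps beat `F`. -/
lemma exists_thin (P : Set ℕ) (hP : P.Infinite) (F : ℕ → ℕ) :
    ∃ Q : Set ℕ, Q ⊆ P ∧ Q.Infinite ∧ ∀ a ∈ Q, ∀ b ∈ Q, a < b → F a ≤ b := by
  have hex : ∀ k : ℕ, ∃ x, x ∈ P ∧ k < x := by
    intro k
    obtain ⟨x, hx, hk⟩ := hP.exists_gt k
    exact ⟨x, hx, hk⟩
  choose next hnextP hnextGt using hex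
  let s : ℕ → ℕ := fun n => Nat.rec (next 0) (fun _ prev => next (max prev (F prev))) n
  have hsucc : ∀ n, s (n + 1) = next (max (s n) (F (s n))) := fun n => rfl
  have hsP : ∀ n, s n ∈ P := by
    intro n
    cases n with
    | zero => exact hnextP 0
    | succ k => rw [hsucc k]; exact hnextP _
  have hmono : StrictMono s := by
    apply strictMono_nat_of_lt_succ
    intro n
    have := hnextGt (max (s n) (F (s n)))
    rw [← hsucc n] at this
    exact lt_of_le_of_lt (le_max_left _ _) this
  refine ⟨Set.range s, ?_, Set.infinite_range_of_injective hmono.injective, ?_⟩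
  · rintro x ⟨n, rfl⟩; exact hsP n
  · rintro a ⟨i, rfl⟩ b ⟨j, rfl⟩ hab
    have hij : i < j := hmono.lt_iff_lt.mp hab
    have h1 : F (s i) < s (i + 1) := by
      rw [hsucc i]
      exact lt_of_le_of_lt (le_max_right _ _) (hnextGt _)
    exact le_trans h1.le (hmono.monotone hij)

/-- Any family of functions of size `< 𝔱` is `≤*`-bounded. -/
lemma bounded_of_lt_tNumber (B : Set (ℕ → ℕ)) (hB : Cardinal.mk B < tNumber) :
    ∃ g : ℕ → ℕ, ∀ f ∈ B, LeStar f g := by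
  classical
  let ι := ↥B
  let r : ι → ι → Prop := WellOrderingRel
  have wf : WellFounded r := IsWellFounded.wf
  let F : ι → ℕ → ℕ := fun i n => (Finset.range (n + 1)).sup i.1
  have hFmono : ∀ i, Monotone (F i) := by
    intro i a b hab
    exact Finset.sup_mono (Finset.range_subset_range.mpr (by omega))
  have hFle : ∀ i n, i.1 n ≤ F i n := fun i n =>
    Finset.le_sup (Finset.self_mem_range_succ n)
  let Good : ∀ i : ι, (∀ j, r j i → Set ℕ) → Set ℕ → Prop := fun i rec S =>
    S.Infinite ∧ (∀ j (hj : r j i), (S \ rec j hj).Finite) ∧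
      ∀ a ∈ S, ∀ b ∈ S, a < b → F i a ≤ b
  let A : ι → Set ℕ :=
    wf.fix (fun i rec => if h : ∃ S, Good i rec S then h.choose else ∅)
  have hAeq : ∀ i, A i =
      if h : ∃ S, Good i (fun j _ => A j) S then h.choose else ∅ := fun i =>
    wf.fix_eq _ i
  have hcard : ∀ s : Set ι, Cardinal.mk (Set.image A s) < tNumber := by
    intro s
    calc Cardinal.mk (Set.image A s) ≤ Cardinal.mk s := Cardinal.mk_image_le
      _ ≤ Cardinal.mk ι := Cardinal.mk_subtype_le _
      _ < tNumber := hB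
  have key : ∀ i, (A i).Infinite ∧ (∀ j, r j i → (A i \ A j).Finite) ∧
      ∀ a ∈ A i, ∀ b ∈ A i, a < b → F i a ≤ b := by
    intro i
    induction i using wf.induction with
    | _ i IH =>
      have hex : ∃ S, Good i (fun j _ => A j) S := by
        obtain ⟨P, hPinf, hPpi⟩ := chain_pseudo (Set.image A {j | r j i})
          (by rintro _ ⟨j, hj, rfl⟩; exact (IH j hj).1)
          (by
            rintro _ ⟨j, hj, rfl⟩ _ ⟨k, hk, rfl⟩
            rcases trichotomous_of r j k with hjk | hjk | hjk
            · exact Or.inr ((IH k hk).2.1 j hjk)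
            · subst hjk; exact Or.inl (by simp)
            · exact Or.inl ((IH j hj).2.1 k hjk))
          (hcard _)
        obtain ⟨Q, hQP, hQinf, hQthin⟩ := exists_thin P hPinf (F i)
        refine ⟨Q, hQinf, ?_, hQthin⟩
        intro j hj
        exact (hPpi (A j) ⟨j, hj, rfl⟩).subset fun x hx => ⟨hQP hx.1, hx.2⟩
      have : Good i (fun j _ => A j) (A i) := by
        rw [hAeq i, dif_pos hex]
        exact hex.choose_spec
      exact this
  -- pseudo-intersection of the whole family
  obtain ⟨P, hPinf, hPpi⟩ := chain_pseudo (Set.image A Set.univ)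
    (by rintro _ ⟨j, -, rfl⟩; exact (key j).1)
    (by
      rintro _ ⟨j, -, rfl⟩ _ ⟨k, -, rfl⟩
      rcases trichotomous_of r j k with hjk | hjk | hjk
      · exact Or.inr ((key k).2.1 j hjk)
      · subst hjk; exact Or.inl (by simp)
      · exact Or.inl ((key j).2.1 k hjk))
    (hcard _)
  let D : ℕ → Set ℕ := fun n => {b | b ∈ P ∧ ∃ a ∈ P, n < a ∧ a < b}
  have hDne : ∀ n, (D n).Nonempty := by
    intro n
    obtain ⟨a, haP, hna⟩ := hPinf.exists_gt n
    obtain ⟨b, hbP, hab⟩ := hPinf.exists_gt a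
    exact ⟨b, hbP, a, haP, hna, hab⟩
  let g : ℕ → ℕ := fun n => sInf (D n)
  refine ⟨g, ?_⟩
  intro f hf
  set i : ι := ⟨f, hf⟩ with hi
  have hfin : (P \ A i).Finite := hPpi (A i) ⟨i, trivial, rfl⟩
  obtain ⟨m, hm⟩ := hfin.bddAbove
  have hsub : {n : ℕ | g n < f n} ⊆ Set.Iic m := by
    intro n hn
    by_contra hnm
    have hmn : m < n := not_le.mp hnm
    have hmem : g n ∈ D n := Nat.sInf_mem (hDne n)
    obtain ⟨hbP, a, haP, hna, hab⟩ := hmem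
    have haA : a ∈ A i := by
      by_contra haA
      exact absurd (hm ⟨haP, haA⟩) (not_le.mpr (lt_trans hmn hna))
    have hbA : g n ∈ A i := by
      by_contra hbA
      exact absurd (hm ⟨hbP, hbA⟩)
        (not_le.mpr (lt_trans (lt_trans hmn hna) hab))
    have hthin : F i a ≤ g n := (key i).2.2 a haA (g n) hbA hab
    have : f n ≤ g n :=
      le_trans (hFle i n) (le_trans (hFmono i hna.le) hthin)
    exact absurd hn (by simp [not_lt.mpr this])
  exact (Set.finite_Iic m).subset hsub

/-- The tower number is at most the unbounding number: `𝔱 ≤ 𝔟`. -/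
theorem tNumber_le_bNumber : tNumber ≤ bNumber := by
  have hne : {c : Cardinal | ∃ B : Set (ℕ → ℕ),
      (¬ ∃ g : ℕ → ℕ, ∀ f ∈ B, LeStar f g) ∧ Cardinal.mk B = c}.Nonempty := by
    refine ⟨Cardinal.mk (Set.univ : Set (ℕ → ℕ)), Set.univ, ?_, rfl⟩
    rintro ⟨g, hg⟩
    have := hg (fun n => g n + 1) (Set.mem_univ _)
    unfold LeStar at this
    have : (Set.univ : Set ℕ).Finite := by
      convert this using 1
      ext n; simp
    exact Set.infinite_univ this
  have hmem : bNumber ∈ {c : Cardinal | ∃ B : Set (ℕ → ℕ),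
      (¬ ∃ g : ℕ → ℕ, ∀ f ∈ B, LeStar f g) ∧ Cardinal.mk B = c} := csInf_mem hne
  obtain ⟨B, hBunb, hBmk⟩ := hmem
  by_contra h
  push_neg at h
  rw [← hBmk] at h
  exact hBunb (bounded_of_lt_tNumber B h)
end
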